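/- arXiv:1809.04247 — 2 statements merged into one kernel-verified Lean document; each statement's English description precedes it below -/
import Mathlib

section
/- Let σ ⊆ R^d be a convex polyhedral cone and γ a face of σ. Then the dual cone of γ satisfies γ^∨ = σ^∨ + γ^⊥, where γ^∨ = {y ∈ (R^d)* : y(x) ≥ 0 for all x ∈ γ}, σ^∨ is the dual of σ, and γ^⊥ = {y : y(x) = 0 for all x ∈ γ}. -/
/-! Given `y ∈ γ^∨` with `γ = σ ∩ u^⊥`, `u ∈ σ^∨`, the functional `y + t u` is nonnegative on
every generator of `σ` once `t` is large: generators with `⟨u, g⟩ > 0` are eventually dominated by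
`t ⟨u, g⟩`, and generators with `⟨u, g⟩ = 0` lie in `γ`. Then `y = (y + t u) + (-t u)` with
`-t u ∈ γ^⊥`. -/

open Filter

open scoped Pointwise

/-- The dual cone of a set `S` in Euclidean space. -/
def dualSet {d : ℕ} (S : Set (EuclideanSpace ℝ (Fin d))) : Set (EuclideanSpace ℝ (Fin d)) :=
  {y | ∀ x ∈ S, 0 ≤ (inner ℝ y x : ℝ)}

/-- The annihilator `S^⊥` of a set `S`. -/
def perpSet {d : ℕ} (S : Set (EuclideanSpace ℝ (Fin d))) : Set (EuclideanSpace ℝ (Fin d)) :=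
  {y | ∀ x ∈ S, (inner ℝ y x : ℝ) = 0}

/-- `σ` is a (closed convex) polyhedral cone: the set of nonnegative combinations of
finitely many generators. -/
def IsPolyCone {d : ℕ} (σ : Set (EuclideanSpace ℝ (Fin d))) : Prop :=
  ∃ (m : ℕ) (g : Fin m → EuclideanSpace ℝ (Fin d)),
    σ = {x | ∃ c : Fin m → ℝ, (∀ i, 0 ≤ c i) ∧ x = ∑ i, c i • g i}

/-- `γ` is a face of `σ`: the intersection of `σ` with a supporting hyperplane. -/
def IsFaceOf {d : ℕ} (σ γ : Set (EuclideanSpace ℝ (Fin d))) : Prop :=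
  ∃ u ∈ dualSet σ, γ = σ ∩ {x | (inner ℝ u x : ℝ) = 0}

section

variable {d : ℕ}

local notation "E" d => EuclideanSpace ℝ (Fin d)

def genCone {ι : Type*} [Fintype ι] (g : ι → E d) : Set (E d) :=
  {x | ∃ c : ι → ℝ, (∀ i, 0 ≤ c i) ∧ x = ∑ i, c i • g i}

section genCone

variable {ι : Type*} [Fintype ι] (g : ι → E d)

theorem generator_mem_genCone (i : ι) : g i ∈ genCone g := by
  classical
  exact ⟨Pi.single i 1, fun j => by by_cases h : j = i <;> simp [h], by simp [Pi.single_apply]⟩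

theorem mem_dualSet_genCone_iff {y : E d} :
    y ∈ dualSet (genCone g) ↔ ∀ i, 0 ≤ (inner ℝ y (g i) : ℝ) := by
  refine ⟨fun hy i => hy _ (generator_mem_genCone g i), ?_⟩
  rintro hy _ ⟨c, hc, rfl⟩
  rw [inner_sum]
  exact Finset.sum_nonneg fun i _ => by
    rw [real_inner_smul_right]
    exact mul_nonneg (hc i) (hy i)

end genCone

theorem dualSet_add_perpSet_subset {σ γ : Set (E d)} (h : γ ⊆ σ) :
    dualSet σ + perpSet γ ⊆ dualSet γ := by
  rintro _ ⟨a, ha, b, hb, rfl⟩ x hx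
  rw [inner_add_left, hb x hx, add_zero]
  exact ha x (h hx)

theorem smul_mem_perpSet_inter_ker (σ : Set (E d)) (u : E d) (t : ℝ) :
    t • u ∈ perpSet (σ ∩ {x | (inner ℝ u x : ℝ) = 0}) := fun _ hx => by
  rw [real_inner_smul_left, hx.2, mul_zero]

theorem eventually_nonneg_add_mul {a b : ℝ} (hb : 0 ≤ b) (ha : b = 0 → 0 ≤ a) :
    ∀ᶠ t in atTop, 0 ≤ a + t * b := by
  rcases hb.eq_or_lt with rfl | hb
  · exact Eventually.of_forall fun t => by simpa using ha rfl
  · exact (tendsto_atTop_add_const_left _ a (tendsto_id.atTop_mul_const hb)).eventually_ge_atTop 0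

theorem exists_add_smul_mem_dualSet_genCone {ι : Type*} [Fintype ι] {g : ι → E d} {u y : E d}
    (hu : u ∈ dualSet (genCone g))
    (hy : y ∈ dualSet (genCone g ∩ {x | (inner ℝ u x : ℝ) = 0})) :
    ∃ t : ℝ, y + t • u ∈ dualSet (genCone g) := by
  have hgen : ∀ i, ∀ᶠ t : ℝ in atTop, 0 ≤ (inner ℝ (y + t • u) (g i) : ℝ) := fun i => by
    simp only [inner_add_left, real_inner_smul_left]
    exact eventually_nonneg_add_mul (hu _ (generator_mem_genCone g i))
      fun h => hy _ ⟨generator_mem_genCone g i, h⟩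
  obtain ⟨t, ht⟩ := (eventually_all.2 hgen).exists
  exact ⟨t, (mem_dualSet_genCone_iff g).2 ht⟩

end

/-- For a face `γ` of a polyhedral cone `σ`, the dual cone of `γ` satisfies
`γ^∨ = σ^∨ + γ^⊥` (Minkowski sum). -/
theorem dual_of_face {d : ℕ} (σ γ : Set (EuclideanSpace ℝ (Fin d)))
    (hσ : IsPolyCone σ) (hγ : IsFaceOf σ γ) :
    dualSet γ = dualSet σ + perpSet γ := by
  obtain ⟨m, g, rfl⟩ := hσ
  obtain ⟨u, hu, rfl⟩ := hγ
  refine subset_antisymm (fun y hy => ?_) (dualSet_add_perpSet_subset Set.inter_subset_left)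
  obtain ⟨t, ht⟩ := exists_add_smul_mem_dualSet_genCone hu hy
  exact ⟨y + t • u, ht, (-t) • u, smul_mem_perpSet_inter_ker _ u (-t), by simp [neg_smul]⟩
end

section
/- For faces τ ⊆ γ of σ, one has (γ^∨ ∩ τ^⊥)/γ^⊥ = ((σ^∨ + γ^⊥) ∩ τ^⊥)/γ^⊥ = (σ^∨ ∩ τ^⊥ + γ^⊥)/γ^⊥, and this set is isomorphic to (σ^∨ ∩ τ^⊥)/(σ^∨ ∩ τ^⊥ ∩ γ^⊥) via the second isomorphism theorem for the additive structure. -/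
/-!
Write the face as `γ = σ ∩ u^⊥` with `u ∈ σ^∨`. For `w ∈ γ^∨`, every generator `g` of `σ` with
`⟪w, g⟫ < 0` has `⟪u, g⟫ > 0`, so `w + n u ∈ σ^∨` for `n` large; as `u ∈ γ^⊥` this gives
`γ^∨ = σ^∨ + γ^⊥`. Since `γ^⊥ ⊆ τ^⊥` and `τ^⊥` is a subspace, the modular law gives
`(σ^∨ + γ^⊥) ∩ τ^⊥ = σ^∨ ∩ τ^⊥ + γ^⊥`, whose image modulo `γ^⊥` is that of `σ^∨ ∩ τ^⊥`; the
isomorphism is then the first isomorphism theorem for `σ^∨ ∩ τ^⊥ → ℝ^d / γ^⊥`.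
-/

open scoped Pointwise

section Quotient

variable {R M : Type*} [Ring R] [AddCommGroup M] [Module R M]

theorem Submodule.add_inter_eq_inter_add {A B : Set M} (p : Submodule R M) (hB : B ⊆ p) :
    (A + B) ∩ p = A ∩ p + B := by
  ext x
  constructor
  · rintro ⟨⟨a, ha, b, hb, rfl⟩, hx⟩
    exact ⟨a, ⟨ha, (p.add_mem_iff_left (hB hb)).mp hx⟩, b, hb, rfl⟩
  · rintro ⟨a, ⟨ha, hap⟩, b, hb, rfl⟩
    exact ⟨⟨a, ha, b, hb, rfl⟩, p.add_mem hap (hB hb)⟩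

theorem Submodule.image_mkQ_add_self (p : Submodule R M) (A : Set M) :
    p.mkQ '' (A + p) = p.mkQ '' A := by
  apply Set.Subset.antisymm
  · rintro _ ⟨_, ⟨a, ha, b, hb, rfl⟩, rfl⟩
    exact ⟨a, ha, by simpa using (Submodule.Quotient.mk_eq_zero p).mpr hb⟩
  · exact Set.image_mono fun a ha => ⟨a, ha, 0, p.zero_mem, add_zero a⟩

noncomputable def Submodule.quotEquivImageMkQ (p : Submodule R M) (A : Set M) :
    Quot (fun x y : A => (x : M) - y ∈ p) ≃ p.mkQ '' A :=
  (Quot.congrRight fun _ _ => (Submodule.Quotient.eq p).symm).trans <|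
    (Setoid.quotientKerEquivRange fun x : A => p.mkQ x).trans
      (Equiv.setCongr (Set.image_eq_range _ _).symm)

theorem Submodule.quotEquivImageMkQ_mk (p : Submodule R M) (A : Set M) (x : A) :
    (p.quotEquivImageMkQ A (Quot.mk _ x) : M ⧸ p) = p.mkQ x :=
  rfl

end Quotient

theorem exists_forall_nonneg_add_mul {ι : Type*} [Finite ι] (a b : ι → ℝ) (hb : ∀ i, 0 ≤ b i)
    (ha : ∀ i, b i = 0 → 0 ≤ a i) : ∃ n : ℝ, ∀ i, 0 ≤ a i + n * b i := by
  suffices ∀ᶠ n in Filter.atTop, ∀ i, 0 ≤ a i + n * b i from this.exists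
  refine Filter.eventually_all.mpr fun i => ?_
  rcases (hb i).eq_or_lt with hbi | hbi
  · exact .of_forall fun n => by simpa [← hbi] using ha i hbi.symm
  · filter_upwards [Filter.eventually_ge_atTop (-a i / b i)] with n hn
    have := (div_le_iff₀ hbi).mp hn
    linarith

section Cone

variable {d : ℕ}

theorem perpSet_eq_orthogonal (S : Set (EuclideanSpace ℝ (Fin d))) :
    perpSet S = (Submodule.span ℝ S)ᗮ := by
  ext y
  simp only [SetLike.mem_coe, Submodule.mem_orthogonal', perpSet, Set.mem_ofPred_eq]
  refine ⟨fun h u hu => ?_, fun h x hx => h x (Submodule.subset_span hx)⟩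
  induction hu using Submodule.span_induction with
  | mem x hx => exact h x hx
  | zero => exact inner_zero_right y
  | add x z _ _ hx hz => rw [inner_add_right, hx, hz, add_zero]
  | smul c x _ hx => rw [real_inner_smul_right, hx, mul_zero]

theorem perpSet_anti {S T : Set (EuclideanSpace ℝ (Fin d))} (h : S ⊆ T) :
    perpSet T ⊆ perpSet S :=
  fun _ hy x hx => hy x (h hx)

theorem dualSet_anti {S T : Set (EuclideanSpace ℝ (Fin d))} (h : S ⊆ T) :
    dualSet T ⊆ dualSet S :=
  fun _ hy x hx => hy x (h hx)

theorem perpSet_subset_dualSet (S : Set (EuclideanSpace ℝ (Fin d))) : perpSet S ⊆ dualSet S :=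
  fun _ hy x hx => (hy x hx).ge

theorem dualSet_add_subset (S : Set (EuclideanSpace ℝ (Fin d))) :
    dualSet S + dualSet S ⊆ dualSet S := by
  rintro _ ⟨y, hy, z, hz, rfl⟩ x hx
  rw [inner_add_left]
  exact add_nonneg (hy x hx) (hz x hx)

def finiteCone {m : ℕ} (g : Fin m → EuclideanSpace ℝ (Fin d)) : Set (EuclideanSpace ℝ (Fin d)) :=
  {x | ∃ c : Fin m → ℝ, (∀ i, 0 ≤ c i) ∧ x = ∑ i, c i • g i}

theorem generator_mem_finiteCone {m : ℕ} (g : Fin m → EuclideanSpace ℝ (Fin d)) (i : Fin m) :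
    g i ∈ finiteCone g :=
  ⟨Pi.single i 1, fun j => by rcases eq_or_ne j i with rfl | h <;> simp [*], by simp⟩

theorem mem_dualSet_finiteCone {m : ℕ} {g : Fin m → EuclideanSpace ℝ (Fin d)}
    {y : EuclideanSpace ℝ (Fin d)} (hy : ∀ i, 0 ≤ inner ℝ y (g i)) :
    y ∈ dualSet (finiteCone g) := by
  rintro _ ⟨c, hc, rfl⟩
  rw [inner_sum]
  exact Finset.sum_nonneg fun i _ => by
    rw [real_inner_smul_right]
    exact mul_nonneg (hc i) (hy i)

theorem exists_add_smul_mem_dualSet {σ : Set (EuclideanSpace ℝ (Fin d))} (hσ : IsPolyCone σ)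
    {u w : EuclideanSpace ℝ (Fin d)} (hu : u ∈ dualSet σ)
    (hw : w ∈ dualSet (σ ∩ {x | inner ℝ u x = 0})) : ∃ n : ℝ, w + n • u ∈ dualSet σ := by
  obtain ⟨m, g, rfl⟩ := hσ
  have hg := generator_mem_finiteCone g
  obtain ⟨n, hn⟩ := exists_forall_nonneg_add_mul (fun i => inner ℝ w (g i))
    (fun i => inner ℝ u (g i)) (fun i => hu _ (hg i)) fun i hi => hw _ ⟨hg i, hi⟩
  refine ⟨n, mem_dualSet_finiteCone fun i => ?_⟩
  simpa only [inner_add_left, real_inner_smul_left] using hn i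

theorem dualSet_face_eq {σ γ : Set (EuclideanSpace ℝ (Fin d))} (hσ : IsPolyCone σ)
    (hγ : IsFaceOf σ γ) : dualSet γ = dualSet σ + perpSet γ := by
  obtain ⟨u, hu, rfl⟩ := hγ
  refine Set.Subset.antisymm (fun w hw => ?_) ?_
  · obtain ⟨n, hn⟩ := exists_add_smul_mem_dualSet hσ hu hw
    exact ⟨w + n • u, hn, (-n) • u, fun x hx => by
      rw [real_inner_smul_left, (hx.2 : inner ℝ u x = 0), mul_zero], by module⟩
  · exact (Set.add_subset_add (dualSet_anti Set.inter_subset_left)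
      (perpSet_subset_dualSet _)).trans (dualSet_add_subset _)

end Cone

theorem quotient_cone_identities_general {d : ℕ} (σ τ γ : Set (EuclideanSpace ℝ (Fin d)))
    (hσ : IsPolyCone σ) (hγ : IsFaceOf σ γ) (hτγ : τ ⊆ γ) :
    ((Submodule.span ℝ γ)ᗮ).mkQ '' (dualSet γ ∩ perpSet τ) =
      ((Submodule.span ℝ γ)ᗮ).mkQ '' ((dualSet σ + perpSet γ) ∩ perpSet τ) ∧
    ((Submodule.span ℝ γ)ᗮ).mkQ '' ((dualSet σ + perpSet γ) ∩ perpSet τ) =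
      ((Submodule.span ℝ γ)ᗮ).mkQ '' (dualSet σ ∩ perpSet τ + perpSet γ) ∧
    ∃ f : Quot (fun x y : {v : EuclideanSpace ℝ (Fin d) // v ∈ dualSet σ ∩ perpSet τ} =>
          (x : EuclideanSpace ℝ (Fin d)) - y ∈ (Submodule.span ℝ γ)ᗮ) ≃
        (((Submodule.span ℝ γ)ᗮ).mkQ '' (dualSet γ ∩ perpSet τ) : Set _),
      ∀ x : {v : EuclideanSpace ℝ (Fin d) // v ∈ dualSet σ ∩ perpSet τ},
        (f (Quot.mk _ x) : EuclideanSpace ℝ (Fin d) ⧸ (Submodule.span ℝ γ)ᗮ) =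
          ((Submodule.span ℝ γ)ᗮ).mkQ x := by
  have hdual : dualSet γ = dualSet σ + perpSet γ := dualSet_face_eq hσ hγ
  have hmodular : (dualSet σ + perpSet γ) ∩ perpSet τ = dualSet σ ∩ perpSet τ + perpSet γ := by
    rw [perpSet_eq_orthogonal τ]
    exact Submodule.add_inter_eq_inter_add _ (perpSet_eq_orthogonal τ ▸ perpSet_anti hτγ)
  have himage : ((Submodule.span ℝ γ)ᗮ).mkQ '' (dualSet γ ∩ perpSet τ) =
      ((Submodule.span ℝ γ)ᗮ).mkQ '' (dualSet σ ∩ perpSet τ) := by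
    rw [hdual, hmodular, perpSet_eq_orthogonal γ, Submodule.image_mkQ_add_self]
  exact ⟨by rw [hdual], by rw [hmodular],
    (Submodule.quotEquivImageMkQ _ _).trans (Equiv.setCongr himage.symm),
    Submodule.quotEquivImageMkQ_mk _ _⟩

/-- For faces `τ ⊆ γ` of a polyhedral cone `σ`, one has, inside `τ^⊥/γ^⊥`,
`(γ^∨ ∩ τ^⊥)/γ^⊥ = ((σ^∨ + γ^⊥) ∩ τ^⊥)/γ^⊥ = (σ^∨ ∩ τ^⊥ + γ^⊥)/γ^⊥`, and this set is
isomorphic to `(σ^∨ ∩ τ^⊥)/(σ^∨ ∩ τ^⊥ ∩ γ^⊥)` via the second isomorphism theorem for the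
additive structure. -/
theorem quotient_cone_identities {d : ℕ} (σ τ γ : Set (EuclideanSpace ℝ (Fin d)))
    (hσ : IsPolyCone σ) (hτ : IsFaceOf σ τ) (hγ : IsFaceOf σ γ) (hτγ : τ ⊆ γ) :
    ((Submodule.span ℝ γ)ᗮ).mkQ '' (dualSet γ ∩ perpSet τ) =
      ((Submodule.span ℝ γ)ᗮ).mkQ '' ((dualSet σ + perpSet γ) ∩ perpSet τ) ∧
    ((Submodule.span ℝ γ)ᗮ).mkQ '' ((dualSet σ + perpSet γ) ∩ perpSet τ) =
      ((Submodule.span ℝ γ)ᗮ).mkQ '' (dualSet σ ∩ perpSet τ + perpSet γ) ∧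
    ∃ f : Quot (fun x y : {v : EuclideanSpace ℝ (Fin d) // v ∈ dualSet σ ∩ perpSet τ} =>
          (x : EuclideanSpace ℝ (Fin d)) - y ∈ (Submodule.span ℝ γ)ᗮ) ≃
        (((Submodule.span ℝ γ)ᗮ).mkQ '' (dualSet γ ∩ perpSet τ) : Set _),
      ∀ x : {v : EuclideanSpace ℝ (Fin d) // v ∈ dualSet σ ∩ perpSet τ},
        (f (Quot.mk _ x) : EuclideanSpace ℝ (Fin d) ⧸ (Submodule.span ℝ γ)ᗮ) =
          ((Submodule.span ℝ γ)ᗮ).mkQ x :=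
  quotient_cone_identities_general σ τ γ hσ hγ hτγ
end
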